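/- As operators on F[t,t^{-1}], for every i ≥ 1: −(i+1)i(i−1)(i−2)·(d/dt)^{i−2} = 3·[t^2 d/dt, [t^2 d/dt, (d/dt)^i]] + 2(2i−1)·[t^3 d/dt, (d/dt)^i], where (d/dt)^{i−2} is interpreted as 0 when i ≤ 2. -/
import Mathlib


/- Operators on F[t,t⁻¹] modelled on ℤ →₀ F (basis element k ↔ t^k). -/

noncomputable section
variable (F : Type*) [Field F] [CharZero F]

/-- Multiplication by `t^i`. -/
def Tpow (i : ℤ) : Module.End F (ℤ →₀ F) :=
  Finsupp.lsum F fun k => Finsupp.lsingle (k + i)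

/-- The degree operator `D = t · d/dt`. -/
def Dop : Module.End F (ℤ →₀ F) :=
  Finsupp.lsum F fun k => (k : F) • Finsupp.lsingle k

/-- The derivative `d/dt`, with `d/dt (t^k) = k t^{k-1}`. -/
def ddt : Module.End F (ℤ →₀ F) :=
  Finsupp.lsum F fun k => (k : F) • Finsupp.lsingle (k - 1)

/-- The commutator of operators. -/
def br (A B : Module.End F (ℤ →₀ F)) : Module.End F (ℤ →₀ F) := A * B - B * A

/-- Falling factorial `k (k-1) ⋯ (k-n+1)` as an element of `F`. -/
def ff (k : ℤ) : ℕ → F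
  | 0 => 1
  | n+1 => (k : F) * ff (k - 1) n

lemma ff_succ' (k : ℤ) (n : ℕ) : ff F k (n+1) = ff F k n * ((k : F) - n) := by
  induction n generalizing k with
  | zero => simp [ff]
  | succ n ih =>
      rw [ff, ih (k - 1), ff]
      push_cast
      ring

lemma ff_shift (k : ℤ) (n : ℕ) : ff F (k+1) (n+1) = ((k : F) + 1) * ff F k n := by
  rw [ff]
  push_cast
  rw [add_sub_cancel_right]

lemma br_apply (A B : Module.End F (ℤ →₀ F)) (x : ℤ →₀ F) :
    br F A B x = A (B x) - B (A x) := rfl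

lemma ddt_single (k : ℤ) (a : F) :
    ddt F (Finsupp.single k a) = Finsupp.single (k - 1) ((k : F) * a) := by
  rw [ddt, Finsupp.lsum_single, LinearMap.smul_apply, Finsupp.lsingle_apply,
    Finsupp.smul_single, smul_eq_mul]

lemma Tpow_single (i k : ℤ) (a : F) :
    Tpow F i (Finsupp.single k a) = Finsupp.single (k + i) a := by
  rw [Tpow, Finsupp.lsum_single, Finsupp.lsingle_apply]

lemma E_single (k : ℤ) (a : F) :
    (Tpow F 2 * ddt F) (Finsupp.single k a) = Finsupp.single (k + 1) ((k : F) * a) := by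
  rw [Module.End.mul_apply, ddt_single, Tpow_single]
  congr 1
  ring

lemma G_single (k : ℤ) (a : F) :
    (Tpow F 3 * ddt F) (Finsupp.single k a) = Finsupp.single (k + 2) ((k : F) * a) := by
  rw [Module.End.mul_apply, ddt_single, Tpow_single]
  congr 1
  ring

lemma ddt_pow_single (n : ℕ) (k : ℤ) (a : F) :
    (ddt F ^ n) (Finsupp.single k a) = Finsupp.single (k - n) (ff F k n * a) := by
  induction n generalizing k a with
  | zero => simp [ff]
  | succ n ih =>
      rw [pow_succ, Module.End.mul_apply, ddt_single, ih, ff]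
      congr 1
      · push_cast; ring
      · ring

lemma brE_single (n : ℕ) (k : ℤ) (a : F) :
    br F (Tpow F 2 * ddt F) (ddt F ^ n) (Finsupp.single k a)
      = Finsupp.single (k - n + 1)
          ((ff F k n * ((k : F) - n) - (k : F) * ff F (k+1) n) * a) := by
  rw [br_apply, ddt_pow_single, E_single, E_single, ddt_pow_single]
  rw [show k + 1 - (n : ℤ) = k - n + 1 by ring,
      show k - (n : ℤ) + 1 = k - n + 1 by ring, ← Finsupp.single_sub]
  congr 1
  push_cast
  ring

lemma brEE_single (n : ℕ) (k : ℤ) (a : F) :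
    br F (Tpow F 2 * ddt F) (br F (Tpow F 2 * ddt F) (ddt F ^ n)) (Finsupp.single k a)
      = Finsupp.single (k - n + 2)
          (((ff F k n * ((k : F) - n) - (k : F) * ff F (k+1) n) * ((k : F) - n + 1)
            - (k : F) * (ff F (k+1) n * (((k : F) + 1) - n)
                - ((k : F) + 1) * ff F (k+2) n)) * a) := by
  rw [br_apply, brE_single, E_single, E_single, brE_single]
  rw [show k - (n : ℤ) + 1 + 1 = k - n + 2 by ring,
      show k + 1 - (n : ℤ) + 1 = k - n + 2 by ring,
      show (k : ℤ) + 1 + 1 = k + 2 by ring, ← Finsupp.single_sub]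
  congr 1
  push_cast
  ring

lemma brG_single (n : ℕ) (k : ℤ) (a : F) :
    br F (Tpow F 3 * ddt F) (ddt F ^ n) (Finsupp.single k a)
      = Finsupp.single (k - n + 2)
          ((ff F k n * ((k : F) - n) - (k : F) * ff F (k+2) n) * a) := by
  rw [br_apply, ddt_pow_single, G_single, G_single, ddt_pow_single]
  rw [show k + 2 - (n : ℤ) = k - n + 2 by ring,
      show k - (n : ℤ) + 2 = k - n + 2 by ring, ← Finsupp.single_sub]
  congr 1
  push_cast
  ring

/-- For every `i ≥ 1`:
`−(i+1)i(i−1)(i−2)(d/dt)^{i−2} = 3[t² d/dt,[t² d/dt,(d/dt)^i]] + 2(2i−1)[t³ d/dt,(d/dt)^i]`,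
where `(d/dt)^{i−2}` is interpreted as 0 when `i ≤ 2`. -/
theorem bracket_identity_one (i : ℕ) (hi : 1 ≤ i) :
    (-(((i : F) + 1) * (i : F) * ((i : F) - 1) * ((i : F) - 2))) •
        (if 2 < i then ddt F ^ (i - 2) else 0)
    = (3 : F) • br F (Tpow F 2 * ddt F) (br F (Tpow F 2 * ddt F) (ddt F ^ i))
      + (2 * (2 * (i : F) - 1)) • br F (Tpow F 3 * ddt F) (ddt F ^ i) := by
  match i, hi with
  | 1, _ =>
      rw [if_neg (by omega), smul_zero]
      refine (Finsupp.lhom_ext fun k a => ?_).symm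
      simp only [LinearMap.add_apply, LinearMap.smul_apply, brEE_single, brG_single,
        Finsupp.smul_single, smul_eq_mul, ← Finsupp.single_add, LinearMap.zero_apply]
      rw [Finsupp.single_eq_zero]
      simp only [ff]
      push_cast
      ring
  | 2, _ =>
      rw [if_neg (by omega), smul_zero]
      refine (Finsupp.lhom_ext fun k a => ?_).symm
      simp only [LinearMap.add_apply, LinearMap.smul_apply, brEE_single, brG_single,
        Finsupp.smul_single, smul_eq_mul, ← Finsupp.single_add, LinearMap.zero_apply]
      rw [Finsupp.single_eq_zero]
      simp only [ff]
      push_cast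
      ring
  | (m+3), _ =>
      rw [if_pos (by omega), show m + 3 - 2 = m + 1 from rfl]
      refine Finsupp.lhom_ext fun k a => ?_
      simp only [LinearMap.add_apply, LinearMap.smul_apply, brEE_single, brG_single,
        ddt_pow_single, Finsupp.smul_single, smul_eq_mul]
      rw [show k - ((m+3:ℕ) : ℤ) + 2 = k - ((m+1:ℕ) : ℤ) by push_cast; ring,
        ← Finsupp.single_add]
      congr 1
      have h1 : ff F k (m+3) = ff F k (m+1) * ((k:F) - (m+1)) * ((k:F) - (m+2)) := by
        rw [show m+3 = (m+2)+1 from rfl, ff_succ', ff_succ']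
        push_cast; ring
      have h2 : ff F (k+1) (m+3) = ((k:F)+1) * (ff F k (m+1) * ((k:F) - (m+1))) := by
        rw [show m+3 = (m+2)+1 from rfl, ff_shift, ff_succ']
        push_cast; ring
      have h3 : ff F (k+2) (m+3) = ((k:F)+2) * (((k:F)+1) * ff F k (m+1)) := by
        rw [show m+3 = (m+2)+1 from rfl, show (k:ℤ)+2 = (k+1)+1 by ring, ff_shift,
          show m+2 = (m+1)+1 from rfl, ff_shift]
        push_cast; ring
      rw [h1, h2, h3]
      push_cast
      ring
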